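/- arXiv:2105.14205 — 8 statements merged into one kernel-verified Lean document; each statement's English description precedes it below -/
import Mathlib

section
/- Let β ∈ [0,1) and Γ ≥ 1 be real scalars, and let K be an integer with K ≥ (2^(1/(1-β)) - 1)·Γ. Then (K+Γ)^(1-β)/(2(1-β)) ≤ ∑_{k=0}^{K} (k+Γ)^(-β) ≤ (K+Γ)^(1-β)/(1-β). -/
/-! Comparing the decreasing function `x ↦ (x + Γ) ^ (-β)` with its integral gives
`((K + 1 + Γ)^(1-β) - Γ^(1-β)) / (1-β) ≤ ∑ ≤ Γ^(-β) + ((K + Γ)^(1-β) - Γ^(1-β)) / (1-β)`.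
The upper bound follows since `Γ^(-β) (1 - β) ≤ Γ^(-β) Γ`. For the lower bound, the hypothesis
on `K` says exactly that `2 Γ^(1-β) ≤ (K + Γ)^(1-β)`, so subtracting `Γ^(1-β)` costs at most half. -/

open Real Set Finset

section
variable {β Γ : ℝ}

theorem integral_add_rpow_neg (hβ : β < 1) (T : ℝ) :
    ∫ x in (0 : ℝ)..T, (x + Γ) ^ (-β) = ((T + Γ) ^ (1 - β) - Γ ^ (1 - β)) / (1 - β) := by
  rw [intervalIntegral.integral_comp_add_right (fun x => x ^ (-β)) Γ,
    integral_rpow (Or.inl (by linarith)), zero_add, neg_add_eq_sub]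

theorem antitoneOn_add_rpow_neg (hβ : 0 ≤ β) (hΓ : 0 < Γ) :
    AntitoneOn (fun x : ℝ => (x + Γ) ^ (-β)) (Ici 0) := fun x hx y _ hxy =>
  rpow_le_rpow_of_nonpos (by linarith [mem_Ici.mp hx]) (by linarith) (by linarith)

theorem integral_le_sum_add_rpow_neg (hβ0 : 0 ≤ β) (hβ1 : β < 1) (hΓ : 0 < Γ) (n : ℕ) :
    ((n + Γ) ^ (1 - β) - Γ ^ (1 - β)) / (1 - β) ≤ ∑ k ∈ range n, ((k : ℝ) + Γ) ^ (-β) := by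
  have h := ((antitoneOn_add_rpow_neg hβ0 hΓ).mono
    (Icc_subset_Ici_self : Icc 0 (0 + (n : ℝ)) ⊆ Ici 0)).integral_le_sum
  simpa only [zero_add, integral_add_rpow_neg hβ1] using h

theorem sum_add_rpow_neg_le (hβ0 : 0 ≤ β) (hβ1 : β < 1) (hΓ : 0 < Γ) (n : ℕ) :
    ∑ k ∈ range (n + 1), ((k : ℝ) + Γ) ^ (-β)
      ≤ Γ ^ (-β) + ((n + Γ) ^ (1 - β) - Γ ^ (1 - β)) / (1 - β) := by
  have h := ((antitoneOn_add_rpow_neg hβ0 hΓ).mono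
    (Icc_subset_Ici_self : Icc 0 (0 + (n : ℝ)) ⊆ Ici 0)).sum_le_integral
  rw [sum_range_succ', add_comm, Nat.cast_zero, zero_add]
  simp only [zero_add, integral_add_rpow_neg hβ1] at h
  exact add_le_add_right h _

theorem rpow_neg_le_rpow_one_sub_div (hβ : β < 1) (hΓ : 0 < Γ) (hβΓ : 1 - β ≤ Γ) :
    Γ ^ (-β) ≤ Γ ^ (1 - β) / (1 - β) := by
  have hsplit : Γ ^ (1 - β) = Γ ^ (-β) * Γ := by rw [← rpow_add_one hΓ.ne', neg_add_eq_sub]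
  rw [le_div_iff₀ (by linarith), hsplit]
  exact mul_le_mul_of_nonneg_left hβΓ (by positivity)

end

theorem two_mul_rpow_le_add_rpow {p Γ x : ℝ} (hp : 0 < p) (hΓ : 0 ≤ Γ)
    (hx : ((2 : ℝ) ^ (1 / p) - 1) * Γ ≤ x) : 2 * Γ ^ p ≤ (x + Γ) ^ p := calc
  2 * Γ ^ p = ((2 : ℝ) ^ (1 / p) * Γ) ^ p := by
    rw [mul_rpow (by positivity) hΓ, ← rpow_mul zero_le_two, one_div_mul_cancel hp.ne', rpow_one]
  _ ≤ (x + Γ) ^ p := rpow_le_rpow (by positivity) (by linarith) hp.le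

theorem stmt_0 (β Γ : ℝ) (hβ0 : 0 ≤ β) (hβ1 : β < 1) (hΓ : 1 ≤ Γ)
    (K : ℕ) (hK : ((2:ℝ) ^ ((1:ℝ)/(1-β)) - 1) * Γ ≤ K) :
    ((K:ℝ) + Γ) ^ (1-β) / (2*(1-β)) ≤ (∑ k ∈ Finset.range (K+1), ((k : ℝ) + Γ) ^ (-β)) ∧
    (∑ k ∈ Finset.range (K+1), ((k : ℝ) + Γ) ^ (-β)) ≤ ((K:ℝ) + Γ) ^ (1-β) / (1-β) := by
  have h1β : 0 < 1 - β := by linarith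
  have hΓ0 : 0 < Γ := by linarith
  constructor
  · have hdouble := two_mul_rpow_le_add_rpow h1β hΓ0.le hK
    have hmono : ((K : ℝ) + Γ) ^ (1 - β) ≤ ((K + 1 : ℕ) + Γ) ^ (1 - β) :=
      rpow_le_rpow (by positivity) (by push_cast; linarith) h1β.le
    calc ((K : ℝ) + Γ) ^ (1 - β) / (2 * (1 - β))
        ≤ (((K + 1 : ℕ) + Γ) ^ (1 - β) - Γ ^ (1 - β)) / (1 - β) := by
          rw [div_le_div_iff₀ (by positivity) h1β]; nlinarith
      _ ≤ _ := integral_le_sum_add_rpow_neg hβ0 hβ1 hΓ0 (K + 1)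
  · calc _ ≤ Γ ^ (-β) + ((K + Γ) ^ (1 - β) - Γ ^ (1 - β)) / (1 - β) :=
          sum_add_rpow_neg_le hβ0 hβ1 hΓ0 K
      _ ≤ Γ ^ (1 - β) / (1 - β) + ((K + Γ) ^ (1 - β) - Γ ^ (1 - β)) / (1 - β) := by
          gcongr; exact rpow_neg_le_rpow_one_sub_div hβ1 hΓ0 (by linarith)
      _ = _ := by ring
end

section
/- Let γ_k = γ/(k+Γ)^a and η_k = η/(k+Γ)^b with γ, η > 0, Γ ≥ 1, a > b > 0, and 3a + b < 2. Then for all k ≥ 1, (1/(γ_k³ η_k)) · (1 - η_k/η_{k-1})² ≤ 1/(γ³ η Γ^{2-3a-b}). -/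
/-!
Put `y = k + Γ`, so that `η_k / η_{k-1} = (1 - 1/y)^b`. Since `0 < b ≤ 1` this ratio lies in
`[1 - 1/y, 1]`, hence `(1 - η_k/η_{k-1})² ≤ y⁻²`. The left-hand side is therefore at most
`y^(3a+b) y⁻² / (γ³ η) = 1 / (γ³ η y^(2-3a-b))`, which decreases in `y ≥ Γ` because `3a + b < 2`.
-/

open Real

lemma div_rpow_div_div_rpow {η y z b : ℝ} (hη : η ≠ 0) (hy : 0 < y) (hz : 0 < z) :
    (η / y ^ b) / (η / z ^ b) = (z / y) ^ b := by
  rw [div_rpow hz.le hy.le]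
  have := (rpow_pos_of_pos hy b).ne'
  have := (rpow_pos_of_pos hz b).ne'
  field_simp

lemma one_sub_rpow_sq_le_one_sub_sq {t b : ℝ} (ht₀ : 0 ≤ t) (ht₁ : t ≤ 1) (hb₀ : 0 ≤ b)
    (hb₁ : b ≤ 1) : (1 - t ^ b) ^ 2 ≤ (1 - t) ^ 2 := by
  have h_le_one : t ^ b ≤ 1 := rpow_le_one ht₀ ht₁ hb₀
  have h_ge : t ≤ t ^ b := self_le_rpow_of_le_one ht₀ ht₁ hb₁
  exact pow_le_pow_left₀ (by linarith) (by linarith) 2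

lemma one_sub_ratio_sq_le {η y b : ℝ} (hη : η ≠ 0) (hy : 1 < y) (hb₀ : 0 ≤ b) (hb₁ : b ≤ 1) :
    (1 - (η / y ^ b) / (η / (y - 1) ^ b)) ^ 2 ≤ (1 / y) ^ 2 := by
  have hy₀ : 0 < y := by linarith
  rw [div_rpow_div_div_rpow hη hy₀ (by linarith)]
  have h_one_sub : 1 - (y - 1) / y = 1 / y := by field_simp; ring
  rw [← h_one_sub]
  exact one_sub_rpow_sq_le_one_sub_sq (by positivity) (by rw [div_le_one hy₀]; linarith) hb₀ hb₁

lemma div_rpow_pow_three_mul_div_rpow {γ η y a b : ℝ} (hy : 0 < y) :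
    (γ / y ^ a) ^ 3 * (η / y ^ b) = γ ^ 3 * η / y ^ (3 * a + b) := by
  rw [div_pow, ← rpow_natCast (y ^ a), ← rpow_mul hy.le, rpow_add hy]
  push_cast
  rw [mul_comm a 3]
  field_simp

lemma one_div_mul_one_div_sq_eq {C y p : ℝ} (hy : 0 < y) :
    1 / (C / y ^ p) * (1 / y) ^ 2 = 1 / (C * y ^ (2 - p)) := by
  rw [rpow_sub hy, rpow_two]
  have := (rpow_pos_of_pos hy p).ne'
  field_simp

theorem stmt_2 (γ η Γ a b : ℝ) (hγ : 0 < γ) (hη : 0 < η) (hΓ : 1 ≤ Γ)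
    (hab : b < a) (hb : 0 < b) (h2 : 3*a + b < 2) (k : ℕ) (hk : 1 ≤ k) :
    (1 / ((γ / ((k:ℝ) + Γ) ^ a) ^ 3 * (η / ((k:ℝ) + Γ) ^ b))) *
      (1 - (η / ((k:ℝ) + Γ) ^ b) / (η / (((k:ℝ) - 1) + Γ) ^ b)) ^ 2
      ≤ 1 / (γ ^ 3 * η * Γ ^ (2 - 3*a - b)) := by
  have hk₁ : (1 : ℝ) ≤ k := by exact_mod_cast hk
  set y : ℝ := k + Γ with hy
  have h_prev : (k : ℝ) - 1 + Γ = y - 1 := by ring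
  have hΓy : Γ ≤ y := by linarith
  rw [h_prev]
  calc _ ≤ 1 / ((γ / y ^ a) ^ 3 * (η / y ^ b)) * (1 / y) ^ 2 := by
        refine mul_le_mul_of_nonneg_left ?_ (by positivity)
        exact one_sub_ratio_sq_le hη.ne' (by linarith) hb.le (by linarith)
    _ = 1 / (γ ^ 3 * η * y ^ (2 - 3 * a - b)) := by
        rw [div_rpow_pow_three_mul_div_rpow (by linarith), one_div_mul_one_div_sq_eq (by linarith)]
        ring_nf
    _ ≤ 1 / (γ ^ 3 * η * Γ ^ (2 - 3 * a - b)) := by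
        gcongr
        linarith
end

section
/- Let (v_k), (α_k), (β_k) be nonnegative real sequences with α_k ∈ (0,1], satisfying v_{k+1} ≤ (1-α_k)v_k + β_k for all k ≥ 1, and β_{k-1}/α_{k-1} ≤ (β_k/α_k)(1 + 0.5·α_k) for all k ≥ 1. Let τ = max{ v_1·α_1/β_1 , 2 } (assuming β_1 > 0). Then v_{k+1} ≤ τ·β_k/α_k for all k ≥ 1. -/
theorem stmt_4 (v α β : ℕ → ℝ) (hv : ∀ k, 0 ≤ v k)
    (hα : ∀ k, 0 < α k ∧ α k ≤ 1) (hβ : ∀ k, 0 ≤ β k) (hβ1 : 0 < β 1)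
    (hrec : ∀ k ≥ 1, v (k+1) ≤ (1 - α k) * v k + β k)
    (hgrow : ∀ k ≥ 1, β (k-1) / α (k-1) ≤ β k / α k * (1 + 0.5 * α k)) :
    ∀ k ≥ 1, v (k+1) ≤ (max (v 1 * α 1 / β 1) 2) * β k / α k := by
  set τ := max (v 1 * α 1 / β 1) 2 with hτ
  have hτ2 : (2:ℝ) ≤ τ := le_max_right _ _
  intro k hk
  induction k with
  | zero => omega
  | succ n ih =>
    rcases Nat.lt_or_ge n 1 with h1 | h1
    · -- base case n = 0
      have hn : n = 0 := by omega
      subst hn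
      obtain ⟨ha1, ha2⟩ := hα 1
      have hv1 : v 1 ≤ τ * β 1 / α 1 := by
        have h := le_max_left (v 1 * α 1 / β 1) 2
        rw [div_le_iff₀ hβ1] at h
        rw [le_div_iff₀ ha1]
        nlinarith
      have hr := hrec 1 (le_refl 1)
      have hca : α 1 * (τ * β 1 / α 1) = τ * β 1 := by field_simp
      nlinarith [mul_le_mul_of_nonneg_left hv1 (by linarith : (0:ℝ) ≤ 1 - α 1),
        hβ 1]
    · -- inductive step
      have ihn := ih h1
      obtain ⟨ha1, ha2⟩ := hα (n+1)
      obtain ⟨hb1, hb2⟩ := hα n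
      have hr := hrec (n+1) (by omega)
      have hg := hgrow (n+1) (by omega)
      simp only [Nat.add_sub_cancel] at hg
      have hc : α (n+1) * (β (n+1) / α (n+1)) = β (n+1) := mul_div_cancel₀ _ (ne_of_gt ha1)
      have hd : α n * (β n / α n) = β n := mul_div_cancel₀ _ (ne_of_gt hb1)
      rw [mul_div_assoc] at ihn ⊢
      set a := α (n+1)
      set b := β (n+1)
      set c := b / a with hcd
      set d := β n / α n
      have hcnn : 0 ≤ c := div_nonneg (hβ _) (le_of_lt ha1)
      have hdnn : 0 ≤ d := div_nonneg (hβ _) (le_of_lt hb1)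
      have hvn : 0 ≤ v (n+1) := hv _
      have key : (1 - a) * v (n+1) ≤ (1 - a) * (τ * d) :=
        mul_le_mul_of_nonneg_left ihn (by linarith)
      have key2 : τ * d ≤ τ * (c * (1 + 0.5 * a)) :=
        mul_le_mul_of_nonneg_left hg (by linarith)
      nlinarith [mul_le_mul_of_nonneg_left key2 (by linarith : (0:ℝ) ≤ 1 - a),
        mul_nonneg (mul_nonneg (by linarith : (0:ℝ) ≤ τ - 2) (le_of_lt ha1)) hcnn,
        mul_nonneg hcnn (mul_pos ha1 ha1).le]
end

section
/- Let X ⊆ ℝⁿ be nonempty compact convex and F : X → ℝⁿ continuous and monotone (i.e., (F(x)−F(y))ᵀ(x−y) ≥ 0 for all x,y ∈ X). Then x ∈ X solves the variational inequality VI(X,F) (i.e., F(x)ᵀ(y−x) ≥ 0 for all y ∈ X) if and only if GAP(x) = sup_{y∈X} F(y)ᵀ(x−y) = 0. -/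
open scoped RealInnerProductSpace

theorem stmt_11 (n : ℕ) (X : Set (EuclideanSpace ℝ (Fin n)))
    (hXne : X.Nonempty) (hXcpt : IsCompact X) (hXconv : Convex ℝ X)
    (F : EuclideanSpace ℝ (Fin n) → EuclideanSpace ℝ (Fin n))
    (hFc : ContinuousOn F X)
    (hmono : ∀ u ∈ X, ∀ v ∈ X, 0 ≤ ⟪F u - F v, u - v⟫)
    (x : EuclideanSpace ℝ (Fin n)) (hx : x ∈ X) :
    (∀ y ∈ X, 0 ≤ ⟪F x, y - x⟫) ↔ sSup ((fun y => ⟪F y, x - y⟫) '' X) = 0 := by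
  set g : EuclideanSpace ℝ (Fin n) → ℝ := fun y => ⟪F y, x - y⟫ with hg
  have hSne : (g '' X).Nonempty := hXne.image _
  have hcont : ContinuousOn g X :=
    hFc.inner (continuousOn_const.sub continuousOn_id)
  have hbdd : BddAbove (g '' X) := (hXcpt.image_of_continuousOn hcont).bddAbove
  constructor
  · intro hVI
    apply le_antisymm
    · apply csSup_le hSne
      rintro v ⟨y, hy, rfl⟩
      have h1 := hmono y hy x hx
      have h2 := hVI y hy
      have h1' : ⟪F y, x - y⟫ ≤ ⟪F x, x - y⟫ := by
        rw [inner_sub_left, inner_sub_right, inner_sub_right] at h1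
        simp only [hg, inner_sub_right]
        linarith
      have h2' : ⟪F x, x - y⟫ ≤ 0 := by
        have : x - y = -(y - x) := by abel
        rw [this, inner_neg_right]
        linarith
      simpa [hg] using h1'.trans h2'
    · have h0 : (0:ℝ) ∈ g '' X := ⟨x, hx, by simp [hg]⟩
      exact le_csSup hbdd h0
  · intro hsup y hy
    have hub : ∀ v ∈ g '' X, v ≤ 0 := fun v hv => hsup ▸ le_csSup hbdd hv
    set φ : ℝ → EuclideanSpace ℝ (Fin n) := fun t => x + t • (y - x) with hφ
    have hφX : ∀ t ∈ Set.Icc (0:ℝ) 1, φ t ∈ X := by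
      intro t ht
      have := hXconv hx hy (by linarith [ht.2] : (0:ℝ) ≤ 1 - t) ht.1 (by ring)
      convert this using 1
      simp only [hφ]
      module
    have hφc : Continuous φ := by continuity
    have hgc : ContinuousOn (fun t => ⟪F (φ t), y - x⟫) (Set.Icc (0:ℝ) 1) := by
      apply ContinuousOn.inner
      · exact hFc.comp hφc.continuousOn hφX
      · exact continuousOn_const
    have hmem : (0:ℝ) ∈ Set.Icc (0:ℝ) 1 := by norm_num
    have htend : Filter.Tendsto (fun t => ⟪F (φ t), y - x⟫)
        (nhdsWithin 0 (Set.Ioc (0:ℝ) 1)) (nhds ⟪F (φ 0), y - x⟫) := by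
      have := (hgc.continuousWithinAt hmem)
      exact this.mono_left (nhdsWithin_mono _ Set.Ioc_subset_Icc_self)
    have hNe : (nhdsWithin (0:ℝ) (Set.Ioc (0:ℝ) 1)).NeBot := by
      rw [nhdsWithin_Ioc_eq_nhdsGT (by norm_num : (0:ℝ) < 1)]
      infer_instance
    have hpos : ∀ᶠ t in nhdsWithin (0:ℝ) (Set.Ioc (0:ℝ) 1),
        0 ≤ ⟪F (φ t), y - x⟫ := by
      filter_upwards [self_mem_nhdsWithin] with t ht
      have hvt : g (φ t) ≤ 0 := hub _ ⟨φ t, hφX t ⟨le_of_lt ht.1, ht.2⟩, rfl⟩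
      have hxφ : x - φ t = (-t) • (y - x) := by
        simp only [hφ]
        module
      rw [hg] at hvt
      simp only [hxφ, inner_smul_right] at hvt
      nlinarith [ht.1]
    have := ge_of_tendsto htend hpos
    have hφ0 : φ 0 = x := by simp [hφ]
    rwa [hφ0] at this
end

section
/- Let X ⊆ ℝⁿ be closed and convex, F : ℝⁿ → ℝⁿ monotone, f : ℝⁿ → ℝ convex with subgradient g(x) ∈ ∂f(x), and η, γ > 0. Define x⁺ = P_X(x − γ(F(x) + η·g(x))) for x ∈ X. Then for every y ∈ X: 2γ·(η(f(x) − f(y)) + F(y)ᵀ(x − y)) ≤ ‖x − y‖² − ‖x⁺ − y‖² + γ²‖F(x) + η·g(x)‖². -/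
open scoped RealInnerProductSpace

theorem stmt_12 (n : ℕ) (X : Set (EuclideanSpace ℝ (Fin n)))
    (hXne : X.Nonempty) (hXcl : IsClosed X) (hXconv : Convex ℝ X)
    (proj : EuclideanSpace ℝ (Fin n) → EuclideanSpace ℝ (Fin n))
    (hproj : ∀ w, proj w ∈ X ∧ ∀ y ∈ X, ⟪w - proj w, y - proj w⟫ ≤ 0)
    (F : EuclideanSpace ℝ (Fin n) → EuclideanSpace ℝ (Fin n))
    (hmono : ∀ u v, 0 ≤ ⟪F u - F v, u - v⟫)
    (f : EuclideanSpace ℝ (Fin n) → ℝ) (hfconv : ConvexOn ℝ Set.univ f)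
    (g : EuclideanSpace ℝ (Fin n) → EuclideanSpace ℝ (Fin n))
    (hg : ∀ u y, f u + ⟪g u, y - u⟫ ≤ f y)
    (η γ : ℝ) (hη : 0 < η) (hγ : 0 < γ)
    (x : EuclideanSpace ℝ (Fin n)) (hx : x ∈ X)
    (y : EuclideanSpace ℝ (Fin n)) (hy : y ∈ X) :
    2 * γ * (η * (f x - f y) + ⟪F y, x - y⟫)
      ≤ ‖x - y‖ ^ 2 - ‖proj (x - γ • (F x + η • g x)) - y‖ ^ 2
        + γ ^ 2 * ‖F x + η • g x‖ ^ 2 := by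
  set d := F x + η • g x with hd
  set w := x - γ • d with hw
  set p := proj w with hp
  have h1 : ⟪w - p, y - p⟫ ≤ 0 := (hproj w).2 y hy
  -- ‖p - y‖² ≤ ‖w - y‖²
  have hexp : ‖w - y‖ ^ 2 = ‖w - p‖ ^ 2 + ‖p - y‖ ^ 2 + 2 * ⟪w - p, p - y⟫ := by
    have h := norm_add_sq_real (w - p) (p - y)
    have : (w - p) + (p - y) = w - y := by abel
    rw [this] at h
    linarith
  have hflip : ⟪w - p, p - y⟫ = -⟪w - p, y - p⟫ := by
    have : p - y = -(y - p) := by abel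
    rw [this, inner_neg_right]
  have hsq : ‖p - y‖ ^ 2 ≤ ‖w - y‖ ^ 2 := by
    nlinarith [sq_nonneg ‖w - p‖]
  -- ‖w - y‖² = ‖x - y‖² - 2γ⟪d, x - y⟫ + γ²‖d‖²
  have hwy : ‖w - y‖ ^ 2 = ‖x - y‖ ^ 2 - 2 * γ * ⟪d, x - y⟫ + γ ^ 2 * ‖d‖ ^ 2 := by
    have h := norm_sub_sq_real (x - y) (γ • d)
    have : (x - y) - γ • d = w - y := by rw [hw]; abel
    rw [this] at h
    rw [h, real_inner_comm, real_inner_smul_left, norm_smul, mul_pow, Real.norm_eq_abs, sq_abs]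
    ring
  have hdin : ⟪d, x - y⟫ = ⟪F x, x - y⟫ + η * ⟪g x, x - y⟫ := by
    rw [hd, inner_add_left, real_inner_smul_left]
  have hFm : ⟪F y, x - y⟫ ≤ ⟪F x, x - y⟫ := by
    have := hmono x y
    rw [inner_sub_left] at this
    linarith
  have hsub : f x - f y ≤ ⟪g x, x - y⟫ := by
    have := hg x y
    have h2 : ⟪g x, y - x⟫ = -⟪g x, x - y⟫ := by
      have : y - x = -(x - y) := by abel
      rw [this, inner_neg_right]
    linarith [this, h2.le]
  nlinarith [mul_le_mul_of_nonneg_left hFm (le_of_lt hγ),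
    mul_le_mul_of_nonneg_left hsub (mul_pos hγ hη).le]
end

section
/- Let X ⊆ ℝⁿ be nonempty compact convex, F : ℝⁿ → ℝⁿ continuous and monotone, and f : ℝⁿ → ℝ continuously differentiable and μ-strongly convex on X with ‖∇f(x)‖ ≤ C_f on X. For η > 0, let x*_η denote the unique solution of VI(X, F + η∇f). Then for any η₁, η₂ > 0, ‖x*_{η₂} − x*_{η₁}‖ ≤ (C_f/μ)·|1 − η₂/η₁|. -/
/-!
Testing the variational inequality of `x₁ = x*_η₁` at `x₂ = x*_η₂` and vice versa and adding,
monotonicity of `F` removes `F`, leaving `η₂⟪∇f x₂, d⟫ ≤ η₁⟪∇f x₁, d⟫` for `d = x₂ - x₁`.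
Writing `η₂ = η₁ - (η₁ - η₂)` and using the strong monotonicity `μ‖d‖² ≤ ⟪∇f x₂ - ∇f x₁, d⟫` of
the gradient of a `μ`-strongly convex function gives `η₁ μ ‖d‖² ≤ |η₁ - η₂| C_f ‖d‖`.
-/

open scoped RealInnerProductSpace

open AffineMap in
theorem ConvexOn.fderiv_sub_nonneg {E : Type*} [NormedAddCommGroup E] [NormedSpace ℝ E]
    {s : Set E} {g : E → ℝ} {g'x g'y : E →L[ℝ] ℝ} {x y : E} (hg : ConvexOn ℝ s g)
    (hx : x ∈ s) (hy : y ∈ s) (hg'x : HasFDerivAt g g'x x) (hg'y : HasFDerivAt g g'y y) :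
    0 ≤ g'y (y - x) - g'x (y - x) := by
  let L : ℝ →ᵃ[ℝ] E := lineMap x y
  have hline : ConvexOn ℝ (L ⁻¹' s) (g ∘ L) := hg.comp_affineMap L
  have h0 : (0 : ℝ) ∈ L ⁻¹' s := by simpa [L] using hx
  have h1 : (1 : ℝ) ∈ L ⁻¹' s := by simpa [L] using hy
  have hd0 : HasDerivAt (g ∘ L) (g'x (y - x)) 0 :=
    hg'x.comp_hasDerivAt_of_eq (0 : ℝ) hasDerivAt_lineMap (by simp [L])
  have hd1 : HasDerivAt (g ∘ L) (g'y (y - x)) 1 :=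
    hg'y.comp_hasDerivAt_of_eq (1 : ℝ) hasDerivAt_lineMap (by simp [L])
  -- the chord slope of `g ∘ L` on `[0, 1]` lies between its derivatives at the endpoints
  have := (hline.le_slope_of_hasDerivAt h0 h1 one_pos hd0).trans
    (hline.slope_le_of_hasDerivAt h0 h1 one_pos hd1)
  linarith

theorem StrongConvexOn.mul_norm_sq_le_inner_gradient_sub {E : Type*} [NormedAddCommGroup E]
    [InnerProductSpace ℝ E] [CompleteSpace E] {s : Set E} {f : E → ℝ} {μ : ℝ} {x y gx gy : E}
    (hf : StrongConvexOn s μ f) (hx : x ∈ s) (hy : y ∈ s)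
    (hgx : HasGradientAt f gx x) (hgy : HasGradientAt f gy y) :
    μ * ‖y - x‖ ^ 2 ≤ ⟪gy - gx, y - x⟫ := by
  have hderiv : ∀ {z gz}, HasGradientAt f gz z → HasFDerivAt (fun w ↦ f w - μ / 2 * ‖w‖ ^ 2)
      (InnerProductSpace.toDual ℝ E gz - (μ / 2) • (2 • innerSL ℝ z)) z := fun h ↦
    h.hasFDerivAt.sub ((hasStrictFDerivAt_norm_sq _).hasFDerivAt.const_mul (μ / 2))
  have := (strongConvexOn_iff_convex.mp hf).fderiv_sub_nonneg hx hy (hderiv hgx) (hderiv hgy)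
  simp only [sub_apply, smul_apply, InnerProductSpace.toDual_apply_apply, innerSL_apply_apply,
    smul_eq_mul, nsmul_eq_mul, Nat.cast_ofNat] at this
  rw [← real_inner_self_eq_norm_sq, inner_sub_left, inner_sub_left]
  linarith

section RegularizedVI

variable {E : Type*} [NormedAddCommGroup E] [InnerProductSpace ℝ E]
  {F g : E → E} {x₁ x₂ : E} {η₁ η₂ μ : ℝ}

theorem mul_norm_sq_le_of_regularized_vi (hF : 0 ≤ ⟪F x₂ - F x₁, x₂ - x₁⟫)
    (hg : μ * ‖x₂ - x₁‖ ^ 2 ≤ ⟪g x₂ - g x₁, x₂ - x₁⟫)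
    (h₁ : 0 ≤ ⟪F x₁ + η₁ • g x₁, x₂ - x₁⟫) (h₂ : 0 ≤ ⟪F x₂ + η₂ • g x₂, x₁ - x₂⟫)
    (hη₁ : 0 ≤ η₁) :
    η₁ * (μ * ‖x₂ - x₁‖ ^ 2) ≤ (η₁ - η₂) * ⟪g x₂, x₂ - x₁⟫ := by
  rw [← neg_sub x₂ x₁, inner_neg_right] at h₂
  simp only [inner_add_left, inner_sub_left, real_inner_smul_left] at hF hg h₁ h₂
  nlinarith

theorem norm_sub_le_of_regularized_vi {C : ℝ} (hF : 0 ≤ ⟪F x₂ - F x₁, x₂ - x₁⟫)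
    (hg : μ * ‖x₂ - x₁‖ ^ 2 ≤ ⟪g x₂ - g x₁, x₂ - x₁⟫)
    (h₁ : 0 ≤ ⟪F x₁ + η₁ • g x₁, x₂ - x₁⟫) (h₂ : 0 ≤ ⟪F x₂ + η₂ • g x₂, x₁ - x₂⟫)
    (hC : ‖g x₂‖ ≤ C) (hμ : 0 < μ) (hη₁ : 0 < η₁) :
    ‖x₂ - x₁‖ ≤ C / μ * |1 - η₂ / η₁| := by
  have hkey : η₁ * μ * ‖x₂ - x₁‖ ^ 2 ≤ |η₁ - η₂| * (C * ‖x₂ - x₁‖) :=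
    calc η₁ * μ * ‖x₂ - x₁‖ ^ 2
        ≤ (η₁ - η₂) * ⟪g x₂, x₂ - x₁⟫ := by
          rw [mul_assoc]; exact mul_norm_sq_le_of_regularized_vi hF hg h₁ h₂ hη₁.le
      _ ≤ |η₁ - η₂| * |⟪g x₂, x₂ - x₁⟫| := by rw [← abs_mul]; exact le_abs_self _
      _ ≤ |η₁ - η₂| * (C * ‖x₂ - x₁‖) := by
          gcongr
          exact (abs_real_inner_le_norm _ _).trans (by gcongr)
  have habs : |1 - η₂ / η₁| = |η₁ - η₂| / η₁ := by
    rw [one_sub_div hη₁.ne', abs_div, abs_of_pos hη₁]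
  rw [habs, div_mul_div_comm, le_div_iff₀ (by positivity)]
  rcases (norm_nonneg (x₂ - x₁)).eq_or_lt with hd | hd
  · rw [← hd, zero_mul]
    exact mul_nonneg ((norm_nonneg _).trans hC) (abs_nonneg _)
  · nlinarith

end RegularizedVI

theorem stmt_15_general (n : ℕ) (X : Set (EuclideanSpace ℝ (Fin n)))
    (F : EuclideanSpace ℝ (Fin n) → EuclideanSpace ℝ (Fin n))
    (hmono : ∀ u v, 0 ≤ ⟪F u - F v, u - v⟫)
    (f : EuclideanSpace ℝ (Fin n) → ℝ)
    (f' : EuclideanSpace ℝ (Fin n) → EuclideanSpace ℝ (Fin n))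
    (hgrad : ∀ x, HasGradientAt f (f' x) x)
    (μ Cf : ℝ) (hμ : 0 < μ) (hsc : StrongConvexOn X μ f)
    (hCf : ∀ x ∈ X, ‖f' x‖ ≤ Cf)
    (xs : ℝ → EuclideanSpace ℝ (Fin n))
    (hxs : ∀ η > 0, xs η ∈ X ∧ ∀ y ∈ X, 0 ≤ ⟪F (xs η) + η • f' (xs η), y - xs η⟫)
    (η₁ η₂ : ℝ) (hη₁ : 0 < η₁) (hη₂ : 0 < η₂) :
    ‖xs η₂ - xs η₁‖ ≤ Cf / μ * |1 - η₂ / η₁| := by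
  obtain ⟨hx₁, hvi₁⟩ := hxs η₁ hη₁
  obtain ⟨hx₂, hvi₂⟩ := hxs η₂ hη₂
  exact norm_sub_le_of_regularized_vi (hmono _ _)
    (hsc.mul_norm_sq_le_inner_gradient_sub hx₁ hx₂ (hgrad _) (hgrad _))
    (hvi₁ _ hx₂) (hvi₂ _ hx₁) (hCf _ hx₂) hμ hη₁

theorem stmt_15 (n : ℕ) (X : Set (EuclideanSpace ℝ (Fin n)))
    (hXne : X.Nonempty) (hXcpt : IsCompact X) (hXconv : Convex ℝ X)
    (F : EuclideanSpace ℝ (Fin n) → EuclideanSpace ℝ (Fin n)) (hFc : Continuous F)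
    (hmono : ∀ u v, 0 ≤ ⟪F u - F v, u - v⟫)
    (f : EuclideanSpace ℝ (Fin n) → ℝ)
    (f' : EuclideanSpace ℝ (Fin n) → EuclideanSpace ℝ (Fin n))
    (hgrad : ∀ x, HasGradientAt f (f' x) x) (hf'c : Continuous f')
    (μ Cf : ℝ) (hμ : 0 < μ) (hsc : StrongConvexOn X μ f)
    (hCf : ∀ x ∈ X, ‖f' x‖ ≤ Cf)
    (xs : ℝ → EuclideanSpace ℝ (Fin n))
    (hxs : ∀ η > 0, xs η ∈ X ∧ ∀ y ∈ X, 0 ≤ ⟪F (xs η) + η • f' (xs η), y - xs η⟫)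
    (η₁ η₂ : ℝ) (hη₁ : 0 < η₁) (hη₂ : 0 < η₂) :
    ‖xs η₂ - xs η₁‖ ≤ Cf / μ * |1 - η₂ / η₁| :=
  stmt_15_general n X F hmono f f' hgrad μ Cf hμ hsc hCf xs hxs η₁ η₂ hη₁ hη₂
end

section
/- Let X ⊆ ℝⁿ be nonempty compact convex, F continuous monotone, f continuously differentiable and μ-strongly convex on X. Let x*_η solve VI(X, F + η∇f) for η > 0, and let (η_k) be a strictly positive sequence with η_k → 0. Then the sequence (x*_{η_k}) converges to the unique minimizer x* of f over SOL(X,F) (the solution set of VI(X,F)). -/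
/-!
Testing the regularized variational inequality at `x*` and the original one at `x*_η`, and adding
the monotonicity inequality for `F`, leaves `⟪∇f(x*_η), x* - x*_η⟫ ≥ 0`; strong convexity then gives
`μ/2 ‖x* - x*_η‖² ≤ f x* - f x*_η`. By compactness it suffices to look at cluster points `a` of
`x*_{η_k}`: since `η_k → 0`, every such `a` solves VI(X, F), so `f x* ≤ f a`, while the estimate
passes to the limit and gives `μ/2 ‖x* - a‖² ≤ f x* - f a ≤ 0`, i.e. `a = x*`.
-/

open scoped RealInnerProductSpace
open Filter Set Topology

variable {E : Type*} [NormedAddCommGroup E] [InnerProductSpace ℝ E]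

def viSolutionSet (X : Set E) (F : E → E) : Set E := {x ∈ X | ∀ y ∈ X, 0 ≤ ⟪F x, y - x⟫}

theorem inner_nonneg_of_mem_viSolutionSet_add_smul {X : Set E} {F G : E → E} {η : ℝ} {x z : E}
    (hF : ∀ u v, 0 ≤ ⟪F u - F v, u - v⟫) (hη : 0 < η)
    (hx : x ∈ viSolutionSet X (F + η • G)) (hz : z ∈ viSolutionSet X F) :
    0 ≤ ⟪G x, z - x⟫ := by
  have hxz : 0 ≤ ⟪F x, z - x⟫ + η * ⟪G x, z - x⟫ := by
    simpa [inner_add_left, real_inner_smul_left] using hx.2 z hz.1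
  have hzx : 0 ≤ ⟪F z, x - z⟫ := hz.2 x hx.1
  have hmono : 0 ≤ ⟪F x - F z, x - z⟫ := hF x z
  have hflip : ⟪F x, z - x⟫ = -⟪F x, x - z⟫ := by rw [← inner_neg_right, neg_sub]
  rw [inner_sub_left] at hmono
  exact (mul_nonneg_iff_of_pos_left hη).1 (by linarith)

theorem mem_viSolutionSet_of_tendsto {ι : Type*} {l : Filter ι} [l.NeBot] {X : Set E}
    (hX : IsClosed X) {F G : E → E} (hF : Continuous F) (hG : Continuous G) {x : ι → E}
    {η : ι → ℝ} {a : E} (hx : Tendsto x l (𝓝 a)) (hη : Tendsto η l (𝓝 0))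
    (hsol : ∀ᶠ i in l, x i ∈ viSolutionSet X (F + η i • G)) : a ∈ viSolutionSet X F := by
  refine ⟨hX.mem_of_tendsto hx (hsol.mono fun i hi => hi.1), fun y hy => ?_⟩
  have hlim : Tendsto (fun i => ⟪F (x i) + η i • G (x i), y - x i⟫) l
      (𝓝 ⟪F a + (0 : ℝ) • G a, y - a⟫) :=
    (((hF.tendsto a).comp hx).add (hη.smul ((hG.tendsto a).comp hx))).inner
      (tendsto_const_nhds.sub hx)
  simpa using ge_of_tendsto hlim (hsol.mono fun i hi => hi.2 y hy)

section Gradient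

variable [CompleteSpace E]

theorem ConvexOn.inner_le_sub_of_hasGradientAt {s : Set E} {g : E → ℝ} {u x y : E}
    (hg : ConvexOn ℝ s g) (hu : HasGradientAt g u x) (hx : x ∈ s) (hy : y ∈ s) :
    ⟪u, y - x⟫ ≤ g y - g x := by
  set ℓ : ℝ →ᵃ[ℝ] E := AffineMap.lineMap x y
  have hline : ConvexOn ℝ (Icc 0 1) (g ∘ ℓ) :=
    (hg.comp_affineMap ℓ).subset (fun t ht => hg.1.lineMap_mem hx hy ht) (convex_Icc 0 1)
  have hderiv : HasDerivAt (g ∘ ℓ) ⟪u, y - x⟫ 0 := by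
    have hu' := (AffineMap.lineMap_apply_zero x y (k := ℝ)).symm ▸ hu.hasFDerivAt
    simpa using hu'.comp_hasDerivAt (0 : ℝ) AffineMap.hasDerivAt_lineMap
  simpa [slope_def_field, ℓ] using
    hline.le_slope_of_hasDerivAt (by simp) (by simp) zero_lt_one hderiv

theorem hasGradientAt_norm_sq (x : E) : HasGradientAt (fun z => ‖z‖ ^ 2) ((2 : ℝ) • x) x := by
  rw [hasGradientAt_iff_hasFDerivAt]
  refine (hasStrictFDerivAt_norm_sq x).hasFDerivAt.congr_fderiv ?_
  ext v; simp [two_mul]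

theorem StrongConvexOn.inner_add_le_sub_of_hasGradientAt {s : Set E} {f : E → ℝ} {μ : ℝ}
    {u x y : E} (hf : StrongConvexOn s μ f) (hu : HasGradientAt f u x) (hx : x ∈ s) (hy : y ∈ s) :
    ⟪u, y - x⟫ + μ / 2 * ‖y - x‖ ^ 2 ≤ f y - f x := by
  have hgrad : HasGradientAt (fun z => f z - μ / 2 * ‖z‖ ^ 2) (u - μ • x) x := by
    rw [hasGradientAt_iff_hasFDerivAt] at hu ⊢
    refine (hu.sub ((hasGradientAt_norm_sq x).hasFDerivAt.const_mul (μ / 2))).congr_fderiv ?_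
    ext v
    simp only [map_smul, map_sub, sub_apply, smul_apply, InnerProductSpace.toDual_apply_apply,
      smul_eq_mul]
    ring
  have h := (strongConvexOn_iff_convex.mp hf).inner_le_sub_of_hasGradientAt hgrad hx hy
  have hexpand : ⟪μ • x, y - x⟫ = μ / 2 * (‖y‖ ^ 2 - ‖x‖ ^ 2 - ‖y - x‖ ^ 2) := by
    rw [real_inner_smul_left, inner_sub_right, real_inner_self_eq_norm_sq, norm_sub_sq_real,
      real_inner_comm]
    ring
  rw [inner_sub_left, hexpand] at h
  linarith

theorem StrongConvexOn.sq_norm_sub_le_of_mem_viSolutionSet {X : Set E} {F f' : E → E}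
    {f : E → ℝ} {μ η : ℝ} {x z : E} (hf : StrongConvexOn X μ f) (hgrad : HasGradientAt f (f' x) x)
    (hF : ∀ u v, 0 ≤ ⟪F u - F v, u - v⟫) (hη : 0 < η)
    (hx : x ∈ viSolutionSet X (F + η • f')) (hz : z ∈ viSolutionSet X F) :
    μ / 2 * ‖z - x‖ ^ 2 ≤ f z - f x := by
  have hdescent := inner_nonneg_of_mem_viSolutionSet_add_smul hF hη hx hz
  have hstrong := hf.inner_add_le_sub_of_hasGradientAt hgrad hx.1 hz.1
  linarith

end Gradient

theorem stmt_16_general (n : ℕ) (X : Set (EuclideanSpace ℝ (Fin n)))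
    (hXcpt : IsCompact X)
    (F : EuclideanSpace ℝ (Fin n) → EuclideanSpace ℝ (Fin n)) (hFc : Continuous F)
    (hmono : ∀ u v, 0 ≤ ⟪F u - F v, u - v⟫)
    (f : EuclideanSpace ℝ (Fin n) → ℝ)
    (f' : EuclideanSpace ℝ (Fin n) → EuclideanSpace ℝ (Fin n))
    (hgrad : ∀ x, HasGradientAt f (f' x) x) (hf'c : Continuous f')
    (μ : ℝ) (hμ : 0 < μ) (hsc : StrongConvexOn X μ f)
    (η : ℕ → ℝ) (hηpos : ∀ k, 0 < η k)
    (hη0 : Filter.Tendsto η Filter.atTop (nhds 0))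
    (xη : ℕ → EuclideanSpace ℝ (Fin n))
    (hxη : ∀ k, xη k ∈ X ∧ ∀ y ∈ X, 0 ≤ ⟪F (xη k) + η k • f' (xη k), y - xη k⟫)
    (xstar : EuclideanSpace ℝ (Fin n))
    (hstar : xstar ∈ {x ∈ X | ∀ y ∈ X, 0 ≤ ⟪F x, y - x⟫} ∧
      ∀ z ∈ {x ∈ X | ∀ y ∈ X, 0 ≤ ⟪F x, y - x⟫}, f xstar ≤ f z) :
    Filter.Tendsto xη Filter.atTop (nhds xstar) := by
  have hfc : Continuous f :=
    continuous_iff_continuousAt.2 fun x => (hgrad x).differentiableAt.continuousAt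
  have hbound : ∀ k, μ / 2 * ‖xstar - xη k‖ ^ 2 ≤ f xstar - f (xη k) := fun k =>
    hsc.sq_norm_sub_le_of_mem_viSolutionSet (hgrad _) hmono (hηpos k) (hxη k) hstar.1
  refine hXcpt.tendsto_nhds_of_unique_mapClusterPt (.of_forall fun k => (hxη k).1)
    fun a _ hcluster => ?_
  obtain ⟨ψ, hψ, hψa⟩ := hcluster.tendsto_subseq
  have haSol : a ∈ viSolutionSet X F :=
    mem_viSolutionSet_of_tendsto hXcpt.isClosed hFc hf'c hψa (hη0.comp hψ.tendsto_atTop)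
      (.of_forall fun k => hxη (ψ k))
  have hbound_a : μ / 2 * ‖xstar - a‖ ^ 2 ≤ f xstar - f a :=
    (isClosed_le (f := fun z => μ / 2 * ‖xstar - z‖ ^ 2) (g := fun z => f xstar - f z)
      (by fun_prop) (by fun_prop)).mem_of_tendsto hψa (.of_forall fun k => hbound (ψ k))
  have hmin := hstar.2 a haSol
  have hsq : ‖xstar - a‖ ^ 2 ≤ 0 := by nlinarith
  have hxa : xstar = a := by simpa [sub_eq_zero] using hsq.antisymm (sq_nonneg _)
  exact hxa.symm

theorem stmt_16 (n : ℕ) (X : Set (EuclideanSpace ℝ (Fin n)))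
    (hXne : X.Nonempty) (hXcpt : IsCompact X) (hXconv : Convex ℝ X)
    (F : EuclideanSpace ℝ (Fin n) → EuclideanSpace ℝ (Fin n)) (hFc : Continuous F)
    (hmono : ∀ u v, 0 ≤ ⟪F u - F v, u - v⟫)
    (f : EuclideanSpace ℝ (Fin n) → ℝ)
    (f' : EuclideanSpace ℝ (Fin n) → EuclideanSpace ℝ (Fin n))
    (hgrad : ∀ x, HasGradientAt f (f' x) x) (hf'c : Continuous f')
    (μ : ℝ) (hμ : 0 < μ) (hsc : StrongConvexOn X μ f)
    (η : ℕ → ℝ) (hηpos : ∀ k, 0 < η k)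
    (hη0 : Filter.Tendsto η Filter.atTop (nhds 0))
    (xη : ℕ → EuclideanSpace ℝ (Fin n))
    (hxη : ∀ k, xη k ∈ X ∧ ∀ y ∈ X, 0 ≤ ⟪F (xη k) + η k • f' (xη k), y - xη k⟫)
    (xstar : EuclideanSpace ℝ (Fin n))
    (hstar : xstar ∈ {x ∈ X | ∀ y ∈ X, 0 ≤ ⟪F x, y - x⟫} ∧
      ∀ z ∈ {x ∈ X | ∀ y ∈ X, 0 ≤ ⟪F x, y - x⟫}, f xstar ≤ f z) :
    Filter.Tendsto xη Filter.atTop (nhds xstar) :=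
  stmt_16_general n X hXcpt F hFc hmono f f' hgrad hf'c μ hμ hsc η hηpos hη0 xη hxη xstar hstar
end

section
/- Let X ⊆ ℝⁿ be closed convex, F : ℝⁿ → ℝⁿ monotone, f : ℝⁿ → ℝ differentiable and μ-strongly convex, with ‖F(x) + η∇f(x)‖ ≤ B on X. Let x*_η ∈ X solve VI(X, F + η∇f), γ > 0 with γημ ≤ 1/2, x ∈ X, and x⁺ = P_X(x − γ(F(x) + η∇f(x))). Then ‖x⁺ − x*_η‖² ≤ (1 − 2γημ)‖x − x*_η‖² + γ²B². -/
open scoped RealInnerProductSpace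

set_option maxHeartbeats 1000000 in
theorem stmt_17 (n : ℕ) (X : Set (EuclideanSpace ℝ (Fin n)))
    (hXne : X.Nonempty) (hXcl : IsClosed X) (hXconv : Convex ℝ X)
    (proj : EuclideanSpace ℝ (Fin n) → EuclideanSpace ℝ (Fin n))
    (hproj : ∀ w, proj w ∈ X ∧ ∀ y ∈ X, ⟪w - proj w, y - proj w⟫ ≤ 0)
    (F : EuclideanSpace ℝ (Fin n) → EuclideanSpace ℝ (Fin n))
    (hmono : ∀ u v, 0 ≤ ⟪F u - F v, u - v⟫)
    (f : EuclideanSpace ℝ (Fin n) → ℝ)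
    (f' : EuclideanSpace ℝ (Fin n) → EuclideanSpace ℝ (Fin n))
    (hgrad : ∀ x, HasGradientAt f (f' x) x)
    (μ : ℝ) (hμ : 0 < μ)
    (hsmono : ∀ u v, μ * ‖u - v‖ ^ 2 ≤ ⟪f' u - f' v, u - v⟫)
    (η B γ : ℝ) (hη : 0 < η) (hB : 0 ≤ B) (hγ : 0 < γ)
    (hbound : ∀ z ∈ X, ‖F z + η • f' z‖ ≤ B)
    (xs : EuclideanSpace ℝ (Fin n)) (hxsX : xs ∈ X)
    (hxs : ∀ y ∈ X, 0 ≤ ⟪F xs + η • f' xs, y - xs⟫)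
    (hstep : γ * η * μ ≤ 1/2)
    (x : EuclideanSpace ℝ (Fin n)) (hx : x ∈ X) :
    ‖proj (x - γ • (F x + η • f' x)) - xs‖ ^ 2
      ≤ (1 - 2 * γ * η * μ) * ‖x - xs‖ ^ 2 + γ ^ 2 * B ^ 2 := by
  set g : EuclideanSpace ℝ (Fin n) := F x + η • f' x with hg
  set w : EuclideanSpace ℝ (Fin n) := x - γ • g with hw
  set p : EuclideanSpace ℝ (Fin n) := proj w with hp
  -- Step 1: ‖p - xs‖² ≤ ‖w - xs‖²
  have hproj2 : ⟪w - p, xs - p⟫ ≤ 0 := (hproj w).2 xs hxsX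
  have hid : ‖w - xs‖ ^ 2 = ‖w - p‖ ^ 2 + 2 * ⟪w - p, p - xs⟫ + ‖p - xs‖ ^ 2 := by
    have : w - xs = (w - p) + (p - xs) := by abel
    rw [this, norm_add_sq_real]
  have hcross : 0 ≤ ⟪w - p, p - xs⟫ := by
    have : ⟪w - p, p - xs⟫ = - ⟪w - p, xs - p⟫ := by
      rw [← inner_neg_right]; congr 1; abel
    linarith [hproj2, this.ge]
  have h1 : ‖p - xs‖ ^ 2 ≤ ‖w - xs‖ ^ 2 := by
    nlinarith [sq_nonneg ‖w - p‖]
  -- Step 2: expand ‖w - xs‖²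
  have hexp : ‖w - xs‖ ^ 2
      = ‖x - xs‖ ^ 2 - 2 * γ * ⟪g, x - xs⟫ + γ ^ 2 * ‖g‖ ^ 2 := by
    have : w - xs = (x - xs) - γ • g := by rw [hw]; abel
    rw [this, norm_sub_sq_real, real_inner_smul_right, real_inner_comm,
      norm_smul, Real.norm_eq_abs, abs_of_pos hγ]
    ring
  -- Step 3: lower bound ⟪g, x - xs⟫
  have hvi : 0 ≤ ⟪F xs + η • f' xs, x - xs⟫ := hxs x hx
  have hdiff : ⟪g - (F xs + η • f' xs), x - xs⟫
      = ⟪F x - F xs, x - xs⟫ + η * ⟪f' x - f' xs, x - xs⟫ := by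
    have : g - (F xs + η • f' xs) = (F x - F xs) + η • (f' x - f' xs) := by
      rw [hg]; rw [smul_sub]; abel
    rw [this, inner_add_left, real_inner_smul_left]
  have hlb : η * μ * ‖x - xs‖ ^ 2 ≤ ⟪g, x - xs⟫ := by
    have h2 := hmono x xs
    have h3 := hsmono x xs
    have h4 : ⟪g, x - xs⟫ = ⟪g - (F xs + η • f' xs), x - xs⟫
        + ⟪F xs + η • f' xs, x - xs⟫ := by
      rw [← inner_add_left]; congr 1; abel
    rw [h4, hdiff]
    nlinarith
  -- Step 4: bound ‖g‖
  have hgB : ‖g‖ ^ 2 ≤ B ^ 2 := by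
    have := hbound x hx
    nlinarith [norm_nonneg g]
  calc ‖p - xs‖ ^ 2 ≤ ‖w - xs‖ ^ 2 := h1
    _ = ‖x - xs‖ ^ 2 - 2 * γ * ⟪g, x - xs⟫ + γ ^ 2 * ‖g‖ ^ 2 := hexp
    _ ≤ (1 - 2 * γ * η * μ) * ‖x - xs‖ ^ 2 + γ ^ 2 * B ^ 2 := by
        nlinarith [sq_nonneg γ]
end
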